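/- Strong duality for the hedonic linear program: there exist a feasible flow (μˢ, μᵈ) maximizing the primal objective and a dual feasible triple (u, v, p) minimizing the dual objective, and the maximal primal objective value equals the minimal dual objective value. -/

import Mathlib

open Finset MeasureTheory Real

variable {X Y Z : Type*} [Fintype X] [Fintype Y] [Fintype Z]
  [Nonempty X] [Nonempty Y] [Nonempty Z]

/-- A pair of supply/demand functions is a feasible flow. -/
def FeasibleFlow (n : X → ℝ) (m : Y → ℝ) (μs : X → Z → ℝ) (μd : Z → Y → ℝ) : Prop :=
  (∀ x z, 0 ≤ μs x z) ∧ (∀ z y, 0 ≤ μd z y) ∧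
    (∀ x, ∑ z, μs x z ≤ n x) ∧ (∀ y, ∑ z, μd z y ≤ m y) ∧
    (∀ z, ∑ x, μs x z = ∑ y, μd z y)

/-- Indirect utility of a producer of type `x` facing prices `p`. -/
noncomputable def indirectU (α : X → Z → ℝ) (p : Z → ℝ) (x : X) : ℝ :=
  max (univ.sup' univ_nonempty fun z => α x z + p z) 0

/-- Indirect utility of a consumer of type `y` facing prices `p`. -/
noncomputable def indirectV (γ : Z → Y → ℝ) (p : Z → ℝ) (y : Y) : ℝ :=
  max (univ.sup' univ_nonempty fun z => γ z y - p z) 0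

/-- A triple `(p, μs, μd)` is a hedonic equilibrium. -/
def HedonicEquilibrium (n : X → ℝ) (m : Y → ℝ) (α : X → Z → ℝ) (γ : Z → Y → ℝ)
    (p : Z → ℝ) (μs : X → Z → ℝ) (μd : Z → Y → ℝ) : Prop :=
  FeasibleFlow n m μs μd ∧
    (∀ x z, 0 < μs x z → α x z + p z = indirectU α p x) ∧
    (∀ z y, 0 < μd z y → γ z y - p z = indirectV γ p y) ∧
    (∀ x, 0 < indirectU α p x → ∑ z, μs x z = n x) ∧
    (∀ y, 0 < indirectV γ p y → ∑ z, μd z y = m y)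

/-- Primal (social welfare) objective of a flow. -/
def primalObj (α : X → Z → ℝ) (γ : Z → Y → ℝ) (μs : X → Z → ℝ) (μd : Z → Y → ℝ) : ℝ :=
  (∑ x, ∑ z, μs x z * α x z) + ∑ z, ∑ y, μd z y * γ z y

/-- Dual feasibility of surpluses and prices. -/
def DualFeasible (α : X → Z → ℝ) (γ : Z → Y → ℝ) (u : X → ℝ) (v : Y → ℝ) (p : Z → ℝ) : Prop :=
  (∀ x, 0 ≤ u x) ∧ (∀ y, 0 ≤ v y) ∧ (∀ x z, α x z + p z ≤ u x) ∧ (∀ z y, γ z y - p z ≤ v y)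

/-- Dual objective. -/
def dualObj (n : X → ℝ) (m : Y → ℝ) (u : X → ℝ) (v : Y → ℝ) : ℝ :=
  (∑ x, n x * u x) + ∑ y, m y * v y

/-!
The primal maximum `V` is attained because feasible flows form a compact polytope. The dual
system `DualFeasible α γ u v p ∧ dualObj n m u v ≤ V` is then solvable: otherwise Farkas' lemma
produces nonnegative multipliers for its constraints, and these are a flow that is feasible for
the capacities `t • n`, `t • m` (with `t` the multiplier of the budget constraint) and has welfare
above `t * V`, contradicting the maximality of `V`. Weak duality makes both solutions optimal,
with equal values.
-/

namespace Module.Dual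

variable {𝕜 W : Type*} [Field 𝕜] [AddCommGroup W] [Module 𝕜 W]

/-- For `v w₀ ≠ 0`, the projection along `v` onto the functionals vanishing at `w₀`: the
Fourier–Motzkin elimination of `v`. -/
def eliminate (v : Module.Dual 𝕜 W) (w₀ : W) : Module.Dual 𝕜 W →ₗ[𝕜] Module.Dual 𝕜 W :=
  LinearMap.id - ((v w₀)⁻¹ • Module.Dual.eval 𝕜 W w₀).smulRight v

variable {v : Module.Dual 𝕜 W} {w₀ : W}

theorem eliminate_apply (f : Module.Dual 𝕜 W) : eliminate v w₀ f = f - ((v w₀)⁻¹ * f w₀) • v :=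
  rfl

theorem eliminate_self (hv : v w₀ ≠ 0) : eliminate v w₀ v = 0 := by
  simp [eliminate_apply, inv_mul_cancel₀ hv]

theorem apply_sub_smul_eq_eliminate_apply (f : Module.Dual 𝕜 W) (w : W) :
    f (w - (v w / v w₀) • w₀) = eliminate v w₀ f w := by
  simp only [eliminate_apply, map_sub, map_smul, LinearMap.sub_apply, LinearMap.smul_apply,
    smul_eq_mul]
  ring

variable [LinearOrder 𝕜] [IsStrictOrderedRing 𝕜]

theorem exists_nonneg_smul_add_eq_of_eliminate {ι : Type*} [Fintype ι] {ℓ : ι → Module.Dual 𝕜 W}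
    {ℓ₀ : Module.Dual 𝕜 W} {c : ι → 𝕜} (hv : v w₀ < 0) (hℓ : ∀ i, 0 ≤ ℓ i w₀)
    (hℓ₀ : ℓ₀ w₀ ≤ 0) (hc : 0 ≤ c)
    (hsum : ∑ i, c i • eliminate v w₀ (ℓ i) = eliminate v w₀ ℓ₀) :
    ∃ t : 𝕜, 0 ≤ t ∧ t • v + ∑ i, c i • ℓ i = ℓ₀ := by
  set S := ∑ i, c i • ℓ i
  have hS : 0 ≤ S w₀ := by
    simpa [S] using Finset.sum_nonneg fun i _ => mul_nonneg (hc i) (hℓ i)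
  have hker : eliminate v w₀ (ℓ₀ - S) = 0 := by simp [S, ← hsum, map_sum]
  rw [eliminate_apply, sub_eq_zero] at hker
  refine ⟨(v w₀)⁻¹ * (ℓ₀ - S) w₀, mul_nonneg_of_nonpos_of_nonpos (inv_nonpos.mpr hv.le) ?_, ?_⟩
  · rw [LinearMap.sub_apply]
    linarith
  · rw [← hker, sub_add_cancel]

theorem farkas {ι : Type*} [Fintype ι] (ℓ : ι → Module.Dual 𝕜 W) (ℓ₀ : Module.Dual 𝕜 W) :
    (∃ c : ι → 𝕜, 0 ≤ c ∧ ∑ i, c i • ℓ i = ℓ₀) ∨ ∃ w, (∀ i, 0 ≤ ℓ i w) ∧ ℓ₀ w < 0 := by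
  revert ℓ ℓ₀
  refine Fintype.induction_empty_option (P := fun α [Fintype α] => ∀ (ℓ : α → Module.Dual 𝕜 W) ℓ₀,
    (∃ c : α → 𝕜, 0 ≤ c ∧ ∑ i, c i • ℓ i = ℓ₀) ∨ ∃ w, (∀ i, 0 ≤ ℓ i w) ∧ ℓ₀ w < 0) ?_ ?_ ?_ ι
  · intro α β _ e ih ℓ ℓ₀
    let _ := Fintype.ofEquiv β e.symm
    rcases ih (ℓ ∘ e) ℓ₀ with ⟨c, hc, hsum⟩ | ⟨w, hw, hℓ₀w⟩
    · refine .inl ⟨c ∘ e.symm, fun i => hc _, ?_⟩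
      rw [← hsum, ← e.sum_comp]
      simp
    · exact .inr ⟨w, fun i => by simpa using hw (e.symm i), hℓ₀w⟩
  · intro ℓ ℓ₀
    by_cases h : ℓ₀ = 0
    · exact .inl ⟨0, le_rfl, by simp [h]⟩
    obtain ⟨w, hw⟩ := DFunLike.ne_iff.mp h
    rcases (hw : ℓ₀ w ≠ 0).lt_or_gt with hw | hw
    · exact .inr ⟨w, nofun, hw⟩
    · exact .inr ⟨-w, nofun, by simpa using hw⟩
  · intro α _ ih ℓ ℓ₀
    rcases ih (ℓ ∘ some) ℓ₀ with ⟨c, hc, hsum⟩ | ⟨w₀, hw₀, hℓ₀w₀⟩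
    · exact .inl ⟨Option.elim' 0 c, (Option.rec le_rfl hc ·), by simpa [Fintype.sum_option]⟩
    set v := ℓ none
    by_cases hv : 0 ≤ v w₀
    · exact .inr ⟨w₀, (Option.rec hv hw₀ ·), hℓ₀w₀⟩
    replace hv : v w₀ < 0 := not_le.mp hv
    rcases ih (eliminate v w₀ ∘ ℓ ∘ some) (eliminate v w₀ ℓ₀) with ⟨c, hc, hsum⟩ | ⟨w, hw, hℓ₀w⟩
    · obtain ⟨t, ht, rfl⟩ := exists_nonneg_smul_add_eq_of_eliminate hv hw₀ hℓ₀w₀.le hc hsum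
      exact .inl ⟨Option.elim' t c, (Option.rec ht hc ·), by simp [Fintype.sum_option, v]⟩
    · refine .inr ⟨w - (v w / v w₀) • w₀, fun i => ?_, ?_⟩
      · rw [apply_sub_smul_eq_eliminate_apply]
        cases i with
        | none => simp [v, eliminate_self hv.ne]
        | some i => exact hw i
      · rwa [apply_sub_smul_eq_eliminate_apply]

theorem farkas_inhomogeneous {ι : Type*} [Fintype ι] (ℓ : ι → Module.Dual 𝕜 W) (β : ι → 𝕜) :
    (∃ w, ∀ i, β i ≤ ℓ i w) ∨ ∃ c : ι → 𝕜, 0 ≤ c ∧ ∑ i, c i • ℓ i = 0 ∧ 0 < ∑ i, c i * β i := by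
  -- homogenize: look for `(w, s)` with `ℓ i w - β i * s ≥ 0` and `s > 0`
  let L : ι → Module.Dual 𝕜 (W × 𝕜) := fun i =>
    ℓ i ∘ₗ LinearMap.fst 𝕜 W 𝕜 - β i • LinearMap.snd 𝕜 W 𝕜
  rcases farkas L (-LinearMap.snd 𝕜 W 𝕜) with ⟨c, hc, hsum⟩ | ⟨⟨w, s⟩, hw, hs⟩
  · refine .inr ⟨c, hc, ?_, ?_⟩
    · ext w
      simpa [L] using LinearMap.congr_fun hsum (w, 0)
    · have hβ : ∑ i, c i * β i = 1 := by simpa [L] using LinearMap.congr_fun hsum (0, 1)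
      exact hβ ▸ one_pos
  · have hs : 0 < s := by simpa using hs
    refine .inl ⟨s⁻¹ • w, fun i => ?_⟩
    have hi : β i * s ≤ ℓ i w := by simpa [L] using hw i
    rwa [map_smul, smul_eq_mul, le_inv_mul_iff₀ hs, mul_comm]

end Module.Dual

section
omit [Nonempty X] [Nonempty Y] [Nonempty Z]

variable {n : X → ℝ} {m : Y → ℝ} {α : X → Z → ℝ} {γ : Z → Y → ℝ}
  {μs : X → Z → ℝ} {μd : Z → Y → ℝ}

theorem FeasibleFlow.sum_mul_price_eq (hf : FeasibleFlow n m μs μd) (p : Z → ℝ) :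
    ∑ x, ∑ z, μs x z * p z = ∑ z, ∑ y, μd z y * p z := by
  rw [Finset.sum_comm]
  simp_rw [← Finset.sum_mul, hf.2.2.2.2]

theorem primalObj_le_dualObj {u : X → ℝ} {v : Y → ℝ} {p : Z → ℝ}
    (hf : FeasibleFlow n m μs μd) (hd : DualFeasible α γ u v p) :
    primalObj α γ μs μd ≤ dualObj n m u v := by
  obtain ⟨hu, hv, hup, hvp⟩ := hd
  calc primalObj α γ μs μd
      = ∑ x, ∑ z, μs x z * (α x z + p z) + ∑ z, ∑ y, μd z y * (γ z y - p z) := by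
        simp only [primalObj, mul_add, mul_sub, Finset.sum_add_distrib, Finset.sum_sub_distrib,
          hf.sum_mul_price_eq p]
        ring
    _ ≤ ∑ x, ∑ z, μs x z * u x + ∑ z, ∑ y, μd z y * v y :=
        add_le_add
          (sum_le_sum fun x _ => sum_le_sum fun z _ =>
            mul_le_mul_of_nonneg_left (hup x z) (hf.1 x z))
          (sum_le_sum fun z _ => sum_le_sum fun y _ =>
            mul_le_mul_of_nonneg_left (hvp z y) (hf.2.1 z y))
    _ = ∑ x, (∑ z, μs x z) * u x + ∑ y, (∑ z, μd z y) * v y := by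
        rw [Finset.sum_comm (f := fun z y => μd z y * v y)]
        simp only [Finset.sum_mul]
    _ ≤ dualObj n m u v :=
        add_le_add (sum_le_sum fun x _ => mul_le_mul_of_nonneg_right (hf.2.2.1 x) (hu x))
          (sum_le_sum fun y _ => mul_le_mul_of_nonneg_right (hf.2.2.2.1 y) (hv y))

theorem FeasibleFlow.supply_le (hf : FeasibleFlow n m μs μd) (x : X) (z : Z) : μs x z ≤ n x :=
  (single_le_sum (fun z' _ => hf.1 x z') (mem_univ z)).trans (hf.2.2.1 x)

theorem FeasibleFlow.demand_le (hf : FeasibleFlow n m μs μd) (z : Z) (y : Y) : μd z y ≤ m y :=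
  (single_le_sum (fun z' _ => hf.2.1 z' y) (mem_univ z)).trans (hf.2.2.2.1 y)

theorem feasibleFlow_zero (hn : ∀ x, 0 ≤ n x) (hm : ∀ y, 0 ≤ m y) :
    FeasibleFlow n m (0 : X → Z → ℝ) (0 : Z → Y → ℝ) :=
  ⟨fun _ _ => le_rfl, fun _ _ => le_rfl, by simpa using hn, by simpa using hm, by simp⟩

variable (n m) in
theorem isCompact_setOf_feasibleFlow :
    IsCompact {q : (X → Z → ℝ) × (Z → Y → ℝ) | FeasibleFlow n m q.1 q.2} := by
  refine isCompact_Icc.of_isClosed_subset ?_ fun q hq =>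
    (⟨⟨hq.1, hq.2.1⟩, ⟨hq.supply_le, hq.demand_le⟩⟩ :
      q ∈ Set.Icc (0, 0) ((fun x _ => n x), (fun _ y => m y)))
  simp only [FeasibleFlow, Set.ofPred_and, Set.ofPred_forall]
  refine .inter ?_ (.inter ?_ (.inter ?_ (.inter ?_ ?_))) <;>
    refine isClosed_iInter fun _ => ?_
  · exact isClosed_iInter fun _ => isClosed_le (by fun_prop) (by fun_prop)
  · exact isClosed_iInter fun _ => isClosed_le (by fun_prop) (by fun_prop)
  · exact isClosed_le (by fun_prop) (by fun_prop)
  · exact isClosed_le (by fun_prop) (by fun_prop)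
  · exact isClosed_eq (by fun_prop) (by fun_prop)

variable (α γ) in
theorem exists_feasibleFlow_forall_primalObj_le (hn : ∀ x, 0 ≤ n x) (hm : ∀ y, 0 ≤ m y) :
    ∃ μs μd, FeasibleFlow n m μs μd ∧ ∀ μs' μd', FeasibleFlow n m μs' μd' →
      primalObj α γ μs' μd' ≤ primalObj α γ μs μd := by
  obtain ⟨q, hq, hmax⟩ := (isCompact_setOf_feasibleFlow n m).exists_isMaxOn
    ⟨(0, 0), feasibleFlow_zero hn hm⟩ (f := fun q => primalObj α γ q.1 q.2)
    (by unfold primalObj; fun_prop)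
  exact ⟨q.1, q.2, hq, fun μs' μd' h => hmax (a := (μs', μd')) h⟩

theorem FeasibleFlow.smul (hf : FeasibleFlow n m μs μd) {t : ℝ} (ht : 0 ≤ t) :
    FeasibleFlow (t • n) (t • m) (t • μs) (t • μd) := by
  obtain ⟨hs, hd, hn, hm, hc⟩ := hf
  refine ⟨fun x z => mul_nonneg ht (hs x z), fun z y => mul_nonneg ht (hd z y), fun x => ?_,
    fun y => ?_, fun z => ?_⟩
  · simpa [← mul_sum] using mul_le_mul_of_nonneg_left (hn x) ht
  · simpa [← mul_sum] using mul_le_mul_of_nonneg_left (hm y) ht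
  · simp [← mul_sum, hc z]

variable (α γ) in
theorem primalObj_smul (t : ℝ) :
    primalObj α γ (t • μs) (t • μd) = t * primalObj α γ μs μd := by
  simp [primalObj, mul_add, mul_sum, mul_assoc]

theorem FeasibleFlow.eq_zero (hf : FeasibleFlow 0 0 μs μd) : μs = 0 ∧ μd = 0 :=
  ⟨funext₂ fun x z => le_antisymm (hf.supply_le x z) (hf.1 x z),
    funext₂ fun z y => le_antisymm (hf.demand_le z y) (hf.2.1 z y)⟩

theorem primalObj_le_mul_of_feasibleFlow_smul {V t : ℝ}
    (hmax : ∀ μs μd, FeasibleFlow n m μs μd → primalObj α γ μs μd ≤ V) (ht : 0 ≤ t)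
    (hf : FeasibleFlow (t • n) (t • m) μs μd) : primalObj α γ μs μd ≤ t * V := by
  rcases ht.eq_or_lt with rfl | ht
  · obtain ⟨rfl, rfl⟩ := FeasibleFlow.eq_zero (by simpa using hf)
    simp [primalObj]
  · have := hmax _ _ (by simpa [ht.ne'] using hf.smul (inv_nonneg.mpr ht.le))
    rwa [primalObj_smul, inv_mul_le_iff₀ ht] at this

variable (n m) in
/-- The dual program together with the budget constraint `dualObj n m u v ≤ V` is the system
`dualBound α γ V i ≤ dualConstraint n m i w` in the unknown `w = (u, v, p) : X ⊕ Y ⊕ Z → ℝ`. -/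
def dualConstraint : X ⊕ Y ⊕ (X × Z) ⊕ (Z × Y) ⊕ Unit → Module.Dual ℝ (X ⊕ Y ⊕ Z → ℝ)
  | .inl x => .proj (.inl x)
  | .inr (.inl y) => .proj (.inr (.inl y))
  | .inr (.inr (.inl (x, z))) => .proj (.inl x) - .proj (.inr (.inr z))
  | .inr (.inr (.inr (.inl (z, y)))) => .proj (.inr (.inl y)) + .proj (.inr (.inr z))
  | .inr (.inr (.inr (.inr ()))) =>
    -(∑ x, n x • .proj (.inl x) + ∑ y, m y • .proj (.inr (.inl y)))

variable (α γ) in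
def dualBound (V : ℝ) : X ⊕ Y ⊕ (X × Z) ⊕ (Z × Y) ⊕ Unit → ℝ
  | .inl _ | .inr (.inl _) => 0
  | .inr (.inr (.inl (x, z))) => α x z
  | .inr (.inr (.inr (.inl (z, y)))) => γ z y
  | .inr (.inr (.inr (.inr ()))) => -V

omit [Fintype Z] in
theorem dualFeasible_of_forall_dualBound_le {V : ℝ} {w : X ⊕ Y ⊕ Z → ℝ}
    (hw : ∀ i, dualBound α γ V i ≤ dualConstraint n m i w) :
    DualFeasible α γ (w ∘ .inl) (w ∘ .inr ∘ .inl) (w ∘ .inr ∘ .inr) ∧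
      dualObj n m (w ∘ .inl) (w ∘ .inr ∘ .inl) ≤ V := by
  refine ⟨⟨fun x => ?_, fun y => ?_, fun x z => ?_, fun z y => ?_⟩, ?_⟩
  · simpa [dualBound, dualConstraint] using hw (.inl x)
  · simpa [dualBound, dualConstraint] using hw (.inr (.inl y))
  · simpa [dualBound, dualConstraint, le_sub_iff_add_le] using hw (.inr (.inr (.inl (x, z))))
  · simpa [dualBound, dualConstraint, sub_le_iff_le_add] using
      hw (.inr (.inr (.inr (.inl (z, y)))))
  · simpa [dualBound, dualConstraint, dualObj] using hw (.inr (.inr (.inr (.inr ()))))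

theorem exists_feasibleFlow_of_sum_smul_dualConstraint_eq_zero {V : ℝ}
    {c : X ⊕ Y ⊕ (X × Z) ⊕ (Z × Y) ⊕ Unit → ℝ} (hc : ∀ i, 0 ≤ c i)
    (hsum : ∑ i, c i • dualConstraint n m i = 0) :
    ∃ t, 0 ≤ t ∧ ∃ μs μd, FeasibleFlow (t • n) (t • m) μs μd ∧
      ∑ i, c i * dualBound α γ V i = primalObj α γ μs μd - t * V := by
  classical
  set t := c (.inr (.inr (.inr (.inr ()))))
  set μs : X → Z → ℝ := fun x z => c (.inr (.inr (.inl (x, z))))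
  set μd : Z → Y → ℝ := fun z y => c (.inr (.inr (.inr (.inl (z, y)))))
  -- evaluating at `Pi.single e 1` reads off the coefficient of `w e`, which must vanish
  have hcoeff e := LinearMap.congr_fun hsum (Pi.single e 1)
  have hsupply x : c (.inl x) + ∑ z, μs x z = t * n x := by
    simpa [dualConstraint, Fintype.sum_sum_type, Fintype.sum_prod_type, Pi.single_apply,
      ← add_assoc, add_neg_eq_zero] using hcoeff (.inl x)
  have hdemand y : c (.inr (.inl y)) + ∑ z, μd z y = t * m y := by
    simpa [dualConstraint, Fintype.sum_sum_type, Fintype.sum_prod_type, Pi.single_apply,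
      ← add_assoc, add_neg_eq_zero] using hcoeff (.inr (.inl y))
  have hclear z : ∑ x, μs x z = ∑ y, μd z y := by
    simpa [dualConstraint, Fintype.sum_sum_type, Fintype.sum_prod_type, Pi.single_apply,
      neg_add_eq_zero] using hcoeff (.inr (.inr z))
  refine ⟨t, hc _, μs, μd, ⟨fun _ _ => hc _, fun _ _ => hc _, fun x => ?_, fun y => ?_,
    hclear⟩, ?_⟩
  · rw [Pi.smul_apply, smul_eq_mul]
    linarith [hsupply x, hc (.inl x)]
  · rw [Pi.smul_apply, smul_eq_mul]
    linarith [hdemand y, hc (.inr (.inl y))]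
  · simp only [dualBound, primalObj, Fintype.sum_sum_type, Fintype.sum_prod_type, mul_zero,
      sum_const_zero, Fintype.sum_unique, mul_neg, zero_add]
    ring

theorem exists_dualFeasible_dualObj_le {V : ℝ}
    (hmax : ∀ μs μd, FeasibleFlow n m μs μd → primalObj α γ μs μd ≤ V) :
    ∃ u v p, DualFeasible α γ u v p ∧ dualObj n m u v ≤ V := by
  rcases Module.Dual.farkas_inhomogeneous (dualConstraint n m) (dualBound α γ V) with
    ⟨w, hw⟩ | ⟨c, hc, hsum, hpos⟩
  · exact ⟨_, _, _, dualFeasible_of_forall_dualBound_le hw⟩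
  · obtain ⟨t, ht, μs, μd, hf, hval⟩ :=
      exists_feasibleFlow_of_sum_smul_dualConstraint_eq_zero (α := α) (γ := γ) (V := V) hc hsum
    linarith [primalObj_le_mul_of_feasibleFlow_smul hmax ht hf]

end

/-- Strong duality for the hedonic linear program. -/
theorem hedonic_strong_duality (n : X → ℝ) (m : Y → ℝ)
    (hn : ∀ x, 0 ≤ n x) (hm : ∀ y, 0 ≤ m y) (α : X → Z → ℝ) (γ : Z → Y → ℝ) :
    ∃ (μs : X → Z → ℝ) (μd : Z → Y → ℝ) (u : X → ℝ) (v : Y → ℝ) (p : Z → ℝ),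
      FeasibleFlow n m μs μd ∧
      (∀ (μs' : X → Z → ℝ) (μd' : Z → Y → ℝ), FeasibleFlow n m μs' μd' →
        primalObj α γ μs' μd' ≤ primalObj α γ μs μd) ∧
      DualFeasible α γ u v p ∧
      (∀ (u' : X → ℝ) (v' : Y → ℝ) (p' : Z → ℝ), DualFeasible α γ u' v' p' →
        dualObj n m u v ≤ dualObj n m u' v') ∧
      primalObj α γ μs μd = dualObj n m u v := by
  obtain ⟨μs, μd, hf, hmax⟩ := exists_feasibleFlow_forall_primalObj_le α γ hn hm
  obtain ⟨u, v, p, hd, hle⟩ := exists_dualFeasible_dualObj_le hmax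
  exact ⟨μs, μd, u, v, p, hf, hmax, hd,
    fun u' v' p' hd' => hle.trans (primalObj_le_dualObj hf hd'),
    le_antisymm (primalObj_le_dualObj hf hd) hle⟩
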